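/- For the multicalibration boosting dynamics with unit rescaling weights, for every integer T ≥ 1, the minimum gap between successive predictions satisfies min_{0 ≤ t ≤ T−1} ‖f_{t+1} − f_t‖₂ ≤ √η · ‖y − f₀‖₂ / √T. -/

import Mathlib

/-!
Write `e_t = y - f_t` and `P = A(f_t)`, so that `f_{t+1} - f_t = η P e_t` and
`e_{t+1} = e_t - η P e_t`. Since `P` is a symmetric idempotent, `⟪P e, e⟫ = ‖P e‖²`, whence
`‖e_{t+1}‖² = ‖e_t‖² - (2η - η²) ‖P e_t‖²`; for `η ≤ 1` this gives
`‖f_{t+1} - f_t‖² = η² ‖P e_t‖² ≤ η (‖e_t‖² - ‖e_{t+1}‖²)`. Summing, the squared gaps over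
`t < T` telescope to at most `η ‖e_0‖²`, and the smallest of `T` numbers is at most the
root mean square.
-/

open Matrix

/-- The action of a real matrix on vectors of `EuclideanSpace`. -/
noncomputable def mulVecE {m n : Type*} [Fintype m] [Fintype n] [DecidableEq n]
    (A : Matrix m n ℝ) (v : EuclideanSpace ℝ n) : EuclideanSpace ℝ m :=
  Matrix.toEuclideanLin A v

open scoped RealInnerProductSpace

theorem Finset.inf'_le_sqrt_sum_sq_div_card {ι : Type*} {s : Finset ι} (hs : s.Nonempty)
    {a : ι → ℝ} (ha : ∀ i ∈ s, 0 ≤ a i) :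
    s.inf' hs a ≤ √((∑ i ∈ s, a i ^ 2) / s.card) := by
  have hm : 0 ≤ s.inf' hs a := Finset.le_inf' hs a ha
  have hcard : (0 : ℝ) < s.card := by exact_mod_cast hs.card_pos
  have hsum : s.card • s.inf' hs a ^ 2 ≤ ∑ i ∈ s, a i ^ 2 :=
    s.card_nsmul_le_sum _ _ fun i hi => pow_le_pow_left₀ hm (s.inf'_le a hi) 2
  rw [nsmul_eq_mul] at hsum
  exact Real.le_sqrt_of_sq_le ((le_div_iff₀ hcard).mpr (by linarith))

section SymmetricProjection

variable {E : Type*} [NormedAddCommGroup E] [InnerProductSpace ℝ E] {P : E →ₗ[ℝ] E}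

theorem LinearMap.IsSymmetricProjection.inner_apply_self (hP : P.IsSymmetricProjection) (x : E) :
    ⟪P x, x⟫ = ‖P x‖ ^ 2 :=
  calc ⟪P x, x⟫ = ⟪P (P x), x⟫ := by rw [← Module.End.mul_apply, hP.isIdempotentElem.eq]
    _ = ⟪P x, P x⟫ := hP.isSymmetric _ _
    _ = ‖P x‖ ^ 2 := real_inner_self_eq_norm_sq _

theorem LinearMap.IsSymmetricProjection.norm_sub_smul_apply_sq
    (hP : P.IsSymmetricProjection) (η : ℝ) (x : E) :
    ‖x - η • P x‖ ^ 2 = ‖x‖ ^ 2 - (2 * η - η ^ 2) * ‖P x‖ ^ 2 := by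
  rw [norm_sub_sq_real, real_inner_smul_right, real_inner_comm, hP.inner_apply_self, norm_smul,
    Real.norm_eq_abs, mul_pow, sq_abs]
  ring

theorem LinearMap.IsSymmetricProjection.norm_smul_apply_sq_le
    (hP : P.IsSymmetricProjection) {η : ℝ} (hη1 : η ≤ 1) (x : E) :
    ‖η • P x‖ ^ 2 ≤ η * (‖x‖ ^ 2 - ‖x - η • P x‖ ^ 2) := by
  rw [hP.norm_sub_smul_apply_sq, norm_smul, Real.norm_eq_abs, mul_pow, sq_abs]
  have : η ^ 2 ≤ η * (2 * η - η ^ 2) := by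
    nlinarith [mul_nonneg (sq_nonneg η) (sub_nonneg.mpr hη1)]
  nlinarith [sq_nonneg ‖P x‖]

theorem sum_range_norm_sub_sq_le_of_isSymmetricProjection {y : E} {η : ℝ} (hη0 : 0 ≤ η)
    (hη1 : η ≤ 1) {P : ℕ → E →ₗ[ℝ] E} (hP : ∀ t, (P t).IsSymmetricProjection) {f : ℕ → E}
    (hf : ∀ t, f (t + 1) = f t + η • P t (y - f t)) (T : ℕ) :
    ∑ t ∈ Finset.range T, ‖f (t + 1) - f t‖ ^ 2 ≤ η * ‖y - f 0‖ ^ 2 := by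
  have hstep : ∀ t, ‖f (t + 1) - f t‖ ^ 2 ≤ η * (‖y - f t‖ ^ 2 - ‖y - f (t + 1)‖ ^ 2) := by
    intro t
    have hgap : f (t + 1) - f t = η • P t (y - f t) := by rw [hf t]; abel
    have herr : y - f (t + 1) = (y - f t) - η • P t (y - f t) := by rw [hf t]; abel
    rw [hgap, herr]
    exact (hP t).norm_smul_apply_sq_le hη1 _
  calc ∑ t ∈ Finset.range T, ‖f (t + 1) - f t‖ ^ 2
      ≤ ∑ t ∈ Finset.range T, η * (‖y - f t‖ ^ 2 - ‖y - f (t + 1)‖ ^ 2) :=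
        Finset.sum_le_sum fun t _ => hstep t
    _ = η * (‖y - f 0‖ ^ 2 - ‖y - f T‖ ^ 2) := by
        rw [← Finset.mul_sum, Finset.sum_range_sub' (fun t => ‖y - f t‖ ^ 2)]
    _ ≤ η * ‖y - f 0‖ ^ 2 := by nlinarith [sq_nonneg ‖y - f T‖]

end SymmetricProjection

theorem Matrix.isSymmetricProjection_toEuclideanLin {n : Type*} [Fintype n] [DecidableEq n]
    {A : Matrix n n ℝ} (hAsymm : Aᵀ = A) (hAproj : A * A = A) :
    (Matrix.toEuclideanLin A).IsSymmetricProjection where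
  isIdempotentElem := by
    rw [IsIdempotentElem, Module.End.mul_eq_comp, ← toLpLin_mul_same, hAproj]
  isSymmetric := isSymmetric_toEuclideanLin_iff.mpr <| by
    rw [IsHermitian, conjTranspose_eq_transpose_of_trivial, hAsymm]

/-- **O(1/√T) rate for the minimum gap, multicalibration boosting with unit weights.**
For the dynamics `f_{t+1} = f_t + η A(f_t)(y - f_t)` with orthogonal projections `A(f)`
and `η ∈ (0,1]`, for every `T ≥ 1`:
`min_{0 ≤ t ≤ T-1} ‖f_{t+1} - f_t‖₂ ≤ √η ‖y - f₀‖₂ / √T`. -/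
theorem multicalibration_boosting_min_gap_rate
    {n : ℕ} (y : EuclideanSpace ℝ (Fin n)) (η : ℝ) (hη0 : 0 < η) (hη1 : η ≤ 1)
    (A : EuclideanSpace ℝ (Fin n) → Matrix (Fin n) (Fin n) ℝ)
    (hAsymm : ∀ f, (A f)ᵀ = A f) (hAproj : ∀ f, A f * A f = A f)
    (f : ℕ → EuclideanSpace ℝ (Fin n))
    (hf : ∀ t, f (t + 1) = f t + η • mulVecE (A (f t)) (y - f t)) :
    ∀ T : ℕ, ∀ hT : 1 ≤ T,
      (Finset.range T).inf'
          (Finset.nonempty_range_iff.mpr (Nat.one_le_iff_ne_zero.mp hT))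
          (fun t => ‖f (t + 1) - f t‖)
        ≤ Real.sqrt η * ‖y - f 0‖ / Real.sqrt T := by
  intro T hT
  have hsum := sum_range_norm_sub_sq_le_of_isSymmetricProjection hη0.le hη1
    (fun t => isSymmetricProjection_toEuclideanLin (hAsymm (f t)) (hAproj (f t))) hf T
  calc _ ≤ √((∑ t ∈ Finset.range T, ‖f (t + 1) - f t‖ ^ 2) / (Finset.range T).card) :=
        Finset.inf'_le_sqrt_sum_sq_div_card _ fun t _ => norm_nonneg _
    _ ≤ √(η * ‖y - f 0‖ ^ 2 / T) := by
        rw [Finset.card_range]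
        gcongr
    _ = √η * ‖y - f 0‖ / √T := by
        rw [Real.sqrt_div' _ (Nat.cast_nonneg T), Real.sqrt_mul hη0.le,
          Real.sqrt_sq (norm_nonneg _)]
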